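/- arXiv:1510.02064 — 5 statements merged into one kernel-verified Lean document; each statement's English description precedes it below -/
import Mathlib

section
/- Let B = [c̲,c̄] × [s̲,s̄] be a box with 0 < c̲ ≤ c̄ and s̲ ≤ s̄, and let α, β, γ be real numbers. Define Δ := max_{(c,s) ∈ B} ( (γ + α c + β s) − arctan(s/c) ) (the maximum exists since B is compact, c̲ > 0, and the function is continuous) and set γ″ := γ − Δ. If γ″ ≥ −2π, then for every (c,s) ∈ B and every x ∈ {0,1}, γ″ + α c + β s − (2π + γ″)(1 − x) ≤ arctan(s/c). -/
/-- Lower arctangent envelope analog of Proposition 1: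
If `Δ` is the maximum over the box `B = [clo,chi] × [slo,shi]` (with `0 < clo ≤ chi`,
`slo ≤ shi`) of `(γ + α c + β s) - arctan(s/c)` and `γ'' := γ - Δ ≥ -2π`, then for all
`(c,s) ∈ B` and binary `x`, `γ'' + α c + β s - (2π + γ'')(1 - x) ≤ arctan(s/c)`. -/
theorem arctan_lower_envelope
    (clo chi slo shi α β γ Δ : ℝ)
    (hclo : 0 < clo) (hcc : clo ≤ chi) (hss : slo ≤ shi)
    (hmax : IsGreatest
      ((fun p : ℝ × ℝ => (γ + α * p.1 + β * p.2) - Real.arctan (p.2 / p.1)) ''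
        (Set.Icc clo chi ×ˢ Set.Icc slo shi)) Δ)
    (hge : -(2 * Real.pi) ≤ γ - Δ) :
    ∀ c ∈ Set.Icc clo chi, ∀ s ∈ Set.Icc slo shi, ∀ x : ℝ, x = 0 ∨ x = 1 →
      (γ - Δ) + α * c + β * s - (2 * Real.pi + (γ - Δ)) * (1 - x) ≤
        Real.arctan (s / c) := by
  intro c hc s hs x hx
  have hmem : ((c, s) : ℝ × ℝ) ∈ Set.Icc clo chi ×ˢ Set.Icc slo shi := ⟨hc, hs⟩
  have hΔ : (γ + α * c + β * s) - Real.arctan (s / c) ≤ Δ :=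
    hmax.2 ⟨(c, s), hmem, rfl⟩
  rcases hx with h | h <;> subst h <;> simp <;> linarith
end

section
/- Let c_ii > 0, c_jj > 0 and let c, s be real numbers with c² + s² = c_ii·c_jj. Let θ_i, θ_j be real numbers with θ_j − θ_i = atan2(s, c), where atan2(s,c) denotes the argument of the nonzero complex number c + s·i. Define e_k := √(c_kk)·cos θ_k and f_k := √(c_kk)·sin θ_k for k ∈ {i,j}. Then e_i² + f_i² = c_ii, e_j² + f_j² = c_jj, e_i·e_j + f_i·f_j = c, and e_i·f_j − e_j·f_i = s. -/
/-!
Write `z = c + s i`. The hypothesis `c² + s² = c_ii c_jj` says `‖z‖ = √c_ii √c_jj`, so the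
products `e_i e_j + f_i f_j` and `e_i f_j - e_j f_i`, which by the subtraction formulas equal
`√c_ii √c_jj cos (θ_j - θ_i)` and `√c_ii √c_jj sin (θ_j - θ_i)`, are `‖z‖ cos (arg z) = c` and
`‖z‖ sin (arg z) = s`.
-/

open Real

lemma sqrt_mul_cos_sq_add_sqrt_mul_sin_sq {r : ℝ} (hr : 0 ≤ r) (θ : ℝ) :
    (√r * cos θ) ^ 2 + (√r * sin θ) ^ 2 = r := by
  rw [mul_pow, mul_pow, ← mul_add, sq_sqrt hr, cos_sq_add_sin_sq, mul_one]

lemma mul_cos_mul_mul_cos_add_mul_sin_mul_mul_sin (r₁ r₂ θ₁ θ₂ : ℝ) :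
    r₁ * cos θ₁ * (r₂ * cos θ₂) + r₁ * sin θ₁ * (r₂ * sin θ₂) = r₁ * r₂ * cos (θ₂ - θ₁) := by
  rw [cos_sub]; ring

lemma mul_cos_mul_mul_sin_sub_mul_cos_mul_mul_sin (r₁ r₂ θ₁ θ₂ : ℝ) :
    r₁ * cos θ₁ * (r₂ * sin θ₂) - r₂ * cos θ₂ * (r₁ * sin θ₁) = r₁ * r₂ * sin (θ₂ - θ₁) := by
  rw [sin_sub]; ring

lemma Complex.norm_add_mul_I_eq_sqrt_mul_sqrt {c s a b : ℝ} (ha : 0 ≤ a)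
    (h : c ^ 2 + s ^ 2 = a * b) : ‖(c + s * Complex.I : ℂ)‖ = √a * √b := by
  rw [Complex.norm_add_mul_I, h, sqrt_mul ha]

/-- Exactness (recovery) direction of the alternative OPF formulation: from
`c_ii, c_jj > 0`, `c² + s² = c_ii·c_jj` and `θ_j - θ_i = atan2(s,c)` (the argument of
the complex number `c + s·i`), the rectangular coordinates `e_k = √c_kk cos θ_k`,
`f_k = √c_kk sin θ_k` satisfy the defining relations. -/
theorem opf_recovery
    (cii cjj c s θi θj ei fi ej fj : ℝ)
    (hcii : 0 < cii) (hcjj : 0 < cjj)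
    (hcs : c ^ 2 + s ^ 2 = cii * cjj)
    (hθ : θj - θi = Complex.arg (c + s * Complex.I))
    (hei : ei = Real.sqrt cii * Real.cos θi) (hfi : fi = Real.sqrt cii * Real.sin θi)
    (hej : ej = Real.sqrt cjj * Real.cos θj) (hfj : fj = Real.sqrt cjj * Real.sin θj) :
    ei ^ 2 + fi ^ 2 = cii ∧ ej ^ 2 + fj ^ 2 = cjj ∧
      ei * ej + fi * fj = c ∧ ei * fj - ej * fi = s := by
  have hnorm := Complex.norm_add_mul_I_eq_sqrt_mul_sqrt hcii.le hcs
  subst hei hfi hej hfj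
  refine ⟨sqrt_mul_cos_sq_add_sqrt_mul_sin_sq hcii.le θi,
    sqrt_mul_cos_sq_add_sqrt_mul_sin_sq hcjj.le θj, ?_, ?_⟩
  · rw [mul_cos_mul_mul_cos_add_mul_sin_mul_mul_sin, ← hnorm, hθ, Complex.norm_mul_cos_arg]
    simp
  · rw [mul_cos_mul_mul_sin_sub_mul_cos_mul_mul_sin, ← hnorm, hθ, Complex.norm_mul_sin_arg]
    simp
end

section
/- Let n be a positive integer and let W be a real symmetric positive semidefinite matrix indexed by (Fin n ⊕ Fin n) × (Fin n ⊕ Fin n). For any indices i, j ∈ Fin n, writing i, j for the first-copy indices and i′, j′ for the second-copy indices, define c_ii := W(i,i) + W(i′,i′), c_jj := W(j,j) + W(j′,j′), c_ij := W(i,j) + W(i′,j′), and s_ij := W(i,j′) − W(j,i′). Then c_ij² + s_ij² ≤ c_ii·c_jj. -/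
/-!
If `W` is the Gram matrix of vectors `e_k, f_k`, then `c_ij + i s_ij` is the Hermitian product
of `e_i + i f_i` and `e_j + i f_j`, and the claim is Cauchy–Schwarz for that Hermitian form.
Over the reals: apply Cauchy–Schwarz for `B ⊕ B` on `M × M` to `(x, x')` and
`w = c (y, y') + s (y', -y)`. As `(y', -y)` is `(y, y')` times `-i`, these two are orthogonal and
of equal length, so `⟪(x, x'), w⟫ = c² + s²` and `‖w‖² = (c² + s²) ‖(y, y')‖²`; the common
factor `c² + s²` cancels.
-/

open Sum

namespace LinearMap.BilinForm

variable {R M : Type*} [CommRing R] [AddCommGroup M] [Module R M]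

def prodSelf (B : LinearMap.BilinForm R M) : LinearMap.BilinForm R (M × M) :=
  B.compl₁₂ (LinearMap.fst R M M) (LinearMap.fst R M M) +
    B.compl₁₂ (LinearMap.snd R M M) (LinearMap.snd R M M)

@[simp]
lemma prodSelf_apply (B : LinearMap.BilinForm R M) (u v : M × M) :
    B.prodSelf u v = B u.1 v.1 + B u.2 v.2 :=
  rfl

lemma IsSymm.prodSelf {B : LinearMap.BilinForm R M} (hB : B.IsSymm) : B.prodSelf.IsSymm :=
  ⟨fun u v => by simp only [prodSelf_apply, hB.eq u.1, hB.eq u.2]⟩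

variable [LinearOrder R] [IsStrictOrderedRing R]

lemma prodSelf_self_nonneg {B : LinearMap.BilinForm R M} (hs : ∀ x, 0 ≤ B x x) (u : M × M) :
    0 ≤ B.prodSelf u u :=
  add_nonneg (hs u.1) (hs u.2)

theorem sq_add_sq_le_of_symm {B : LinearMap.BilinForm R M} (hs : ∀ x, 0 ≤ B x x) (hB : B.IsSymm)
    (x x' y y' : M) :
    (B x y + B x' y') ^ 2 + (B x y' - B x' y) ^ 2 ≤ (B x x + B x' x') * (B y y + B y' y') := by
  set c := B x y + B x' y'
  set s := B x y' - B x' y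
  set w : M × M := c • (y, y') + s • (y', -y)
  have hxw : B.prodSelf (x, x') w = c ^ 2 + s ^ 2 := by
    simp only [w, prodSelf_apply, map_add, map_smul, map_neg, smul_eq_mul, c, s]
    ring
  have hww : B.prodSelf w w = (c ^ 2 + s ^ 2) * (B y y + B y' y') := by
    simp only [w, prodSelf_apply, map_add, map_smul, map_neg, LinearMap.add_apply,
      LinearMap.smul_apply, LinearMap.neg_apply, smul_eq_mul, hB.eq y' y]
    ring
  have cauchy_schwarz := B.prodSelf.apply_sq_le_of_symm (prodSelf_self_nonneg hs)
    (isSymm_iff.mp hB.prodSelf) (x, x') w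
  rw [hxw, hww, prodSelf_apply] at cauchy_schwarz
  have hxx : 0 ≤ B x x + B x' x' := prodSelf_self_nonneg hs (x, x')
  have hyy : 0 ≤ B y y + B y' y' := prodSelf_self_nonneg hs (y, y')
  rcases (by positivity : (0 : R) ≤ c ^ 2 + s ^ 2).eq_or_lt with hL | hL
  · rw [← hL]
    exact mul_nonneg hxx hyy
  · refine le_of_mul_le_mul_left ?_ hL
    linear_combination cauchy_schwarz

end LinearMap.BilinForm

theorem sdp_implies_soc_general (n : ℕ)
    (W : Matrix (Fin n ⊕ Fin n) (Fin n ⊕ Fin n) ℝ) (hW : W.PosSemidef)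
    (i j : Fin n) :
    (W (inl i) (inl j) + W (inr i) (inr j)) ^ 2 +
      (W (inl i) (inr j) - W (inl j) (inr i)) ^ 2 ≤
    (W (inl i) (inl i) + W (inr i) (inr i)) *
      (W (inl j) (inl j) + W (inr j) (inr j)) := by
  have hsymm : W.IsSymm := by
    simpa [Matrix.IsSymm, Matrix.IsHermitian] using hW.isHermitian
  have hnonneg (v : Fin n ⊕ Fin n → ℝ) : 0 ≤ W.toBilin' v v := by
    simpa [Matrix.toBilin'_apply'] using hW.dotProduct_mulVec_nonneg v
  have key := LinearMap.BilinForm.sq_add_sq_le_of_symm hnonneg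
    (Matrix.isSymm_toBilin'_iff_isSymm.mpr hsymm) (Pi.single (inl i) 1) (Pi.single (inr i) 1)
    (Pi.single (inl j) 1) (Pi.single (inr j) 1)
  simp only [Matrix.toBilin'_single] at key
  rwa [hsymm.apply (inr i) (inl j)]

/-- The SDP constraint `W ⪰ 0` implies the rotated second-order cone constraint
`c_ij² + s_ij² ≤ c_ii·c_jj`, where `c_ij := W(i,j) + W(i',j')`,
`s_ij := W(i,j') - W(j,i')`, `c_ii := W(i,i) + W(i',i')`. -/
theorem sdp_implies_soc (n : ℕ) (hn : 0 < n)
    (W : Matrix (Fin n ⊕ Fin n) (Fin n ⊕ Fin n) ℝ) (hW : W.PosSemidef)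
    (i j : Fin n) :
    (W (inl i) (inl j) + W (inr i) (inr j)) ^ 2 +
      (W (inl i) (inr j) - W (inl j) (inr i)) ^ 2 ≤
    (W (inl i) (inl i) + W (inr i) (inr i)) *
      (W (inl j) (inl j) + W (inr j) (inr j)) :=
  sdp_implies_soc_general n W hW i j
end

section
/- For i = 1, 2, let K_i ⊆ ℝ^{m_i} be a convex cone containing 0 (a convex set closed under nonnegative scalar multiplication), let A_i : ℝ^n → ℝ^{m_i} and B_i : ℝ^{p_i} → ℝ^{m_i} be linear maps, let b_i ∈ ℝ^{m_i}, and define S_i := { x ∈ ℝ^n : ∃ u ∈ ℝ^{p_i}, A_i x + B_i u − b_i ∈ K_i }. Define Q := { x ∈ ℝ^n : ∃ x¹, x² ∈ ℝ^n, u¹ ∈ ℝ^{p_1}, u² ∈ ℝ^{p_2}, λ_1, λ_2 ∈ ℝ, with λ_1, λ_2 ≥ 0, λ_1 + λ_2 = 1, x = x¹ + x², and A_i x^i + B_i u^i − λ_i b_i ∈ K_i for i = 1, 2 }. Then Q is convex, S_1 ∪ S_2 ⊆ Q, and consequently the convex hull of S_1 ∪ S_2 is contained in Q. -/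
/-- One direction of the extended conic representation of the convex hull of a union of
two conic representable sets (Appendix A): `Q` is convex and contains `S₁ ∪ S₂`, hence
it contains `conv(S₁ ∪ S₂)`. -/
theorem conic_union_extended_formulation_outer
    (n m₁ m₂ p₁ p₂ : ℕ)
    (K₁ : Set (Fin m₁ → ℝ)) (K₂ : Set (Fin m₂ → ℝ))
    (hK₁conv : Convex ℝ K₁) (hK₁zero : (0 : Fin m₁ → ℝ) ∈ K₁)
    (hK₁smul : ∀ t : ℝ, 0 ≤ t → ∀ k ∈ K₁, t • k ∈ K₁)
    (hK₂conv : Convex ℝ K₂) (hK₂zero : (0 : Fin m₂ → ℝ) ∈ K₂)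
    (hK₂smul : ∀ t : ℝ, 0 ≤ t → ∀ k ∈ K₂, t • k ∈ K₂)
    (A₁ : (Fin n → ℝ) →ₗ[ℝ] (Fin m₁ → ℝ)) (B₁ : (Fin p₁ → ℝ) →ₗ[ℝ] (Fin m₁ → ℝ))
    (b₁ : Fin m₁ → ℝ)
    (A₂ : (Fin n → ℝ) →ₗ[ℝ] (Fin m₂ → ℝ)) (B₂ : (Fin p₂ → ℝ) →ₗ[ℝ] (Fin m₂ → ℝ))
    (b₂ : Fin m₂ → ℝ)
    (S₁ S₂ Q : Set (Fin n → ℝ))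
    (hS₁ : S₁ = {x | ∃ u : Fin p₁ → ℝ, A₁ x + B₁ u - b₁ ∈ K₁})
    (hS₂ : S₂ = {x | ∃ u : Fin p₂ → ℝ, A₂ x + B₂ u - b₂ ∈ K₂})
    (hQ : Q = {x | ∃ (x₁ x₂ : Fin n → ℝ) (u₁ : Fin p₁ → ℝ) (u₂ : Fin p₂ → ℝ)
      (l₁ l₂ : ℝ), 0 ≤ l₁ ∧ 0 ≤ l₂ ∧ l₁ + l₂ = 1 ∧ x = x₁ + x₂ ∧
      A₁ x₁ + B₁ u₁ - l₁ • b₁ ∈ K₁ ∧ A₂ x₂ + B₂ u₂ - l₂ • b₂ ∈ K₂}) :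
    Convex ℝ Q ∧ S₁ ∪ S₂ ⊆ Q ∧ convexHull ℝ (S₁ ∪ S₂) ⊆ Q := by
  subst hS₁ hS₂ hQ
  have hconv : Convex ℝ {x : Fin n → ℝ | ∃ (x₁ x₂ : Fin n → ℝ) (u₁ : Fin p₁ → ℝ)
      (u₂ : Fin p₂ → ℝ) (l₁ l₂ : ℝ), 0 ≤ l₁ ∧ 0 ≤ l₂ ∧ l₁ + l₂ = 1 ∧ x = x₁ + x₂ ∧
      A₁ x₁ + B₁ u₁ - l₁ • b₁ ∈ K₁ ∧ A₂ x₂ + B₂ u₂ - l₂ • b₂ ∈ K₂} := by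
    rintro x ⟨x₁, x₂, u₁, u₂, l₁, l₂, hl₁, hl₂, hl, hx, h1, h2⟩
      y ⟨y₁, y₂, v₁, v₂, k₁, k₂, hk₁, hk₂, hk, hy, g1, g2⟩ a b ha hb hab
    refine ⟨a • x₁ + b • y₁, a • x₂ + b • y₂, a • u₁ + b • v₁, a • u₂ + b • v₂,
      a * l₁ + b * k₁, a * l₂ + b * k₂, by positivity, by positivity, by ring_nf; nlinarith,
      ?_, ?_, ?_⟩
    · subst hx hy; module
    · have := hK₁conv h1 g1 ha hb hab
      convert this using 1
      simp only [map_add, map_smul]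
      module
    · have := hK₂conv h2 g2 ha hb hab
      convert this using 1
      simp only [map_add, map_smul]
      module
  have hsub : {x : Fin n → ℝ | ∃ u : Fin p₁ → ℝ, A₁ x + B₁ u - b₁ ∈ K₁} ∪
      {x | ∃ u : Fin p₂ → ℝ, A₂ x + B₂ u - b₂ ∈ K₂} ⊆
      {x : Fin n → ℝ | ∃ (x₁ x₂ : Fin n → ℝ) (u₁ : Fin p₁ → ℝ)
      (u₂ : Fin p₂ → ℝ) (l₁ l₂ : ℝ), 0 ≤ l₁ ∧ 0 ≤ l₂ ∧ l₁ + l₂ = 1 ∧ x = x₁ + x₂ ∧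
      A₁ x₁ + B₁ u₁ - l₁ • b₁ ∈ K₁ ∧ A₂ x₂ + B₂ u₂ - l₂ • b₂ ∈ K₂} := by
    rintro x (⟨u, hu⟩ | ⟨u, hu⟩)
    · refine ⟨x, 0, u, 0, 1, 0, zero_le_one, le_refl _, by ring, by simp, ?_, ?_⟩
      · convert hu using 2; module
      · simpa using hK₂zero
    · refine ⟨0, x, 0, u, 0, 1, le_refl _, zero_le_one, by ring, by simp, ?_, ?_⟩
      · simpa using hK₁zero
      · convert hu using 2; module
  exact ⟨hconv, hsub, convexHull_min hsub hconv⟩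
end

section
/- For i = 1, 2, let K_i ⊆ ℝ^{m_i} be a convex cone containing 0 (a convex set closed under nonnegative scalar multiplication and under addition), let A_i : ℝ^n → ℝ^{m_i} and B_i : ℝ^{p_i} → ℝ^{m_i} be linear maps, let b_i ∈ ℝ^{m_i}, and define S_i := { x ∈ ℝ^n : ∃ u ∈ ℝ^{p_i}, A_i x + B_i u − b_i ∈ K_i }. Define Q := { x ∈ ℝ^n : ∃ x¹, x² ∈ ℝ^n, u¹ ∈ ℝ^{p_1}, u² ∈ ℝ^{p_2}, λ_1, λ_2 ∈ ℝ, with λ_1, λ_2 ≥ 0, λ_1 + λ_2 = 1, x = x¹ + x², and A_i x^i + B_i u^i − λ_i b_i ∈ K_i for i = 1, 2 }. If S_1 and S_2 are both nonempty and bounded, then Q ⊆ conv(S_1 ∪ S_2); combined with the reverse inclusion, Q equals the convex hull of S_1 ∪ S_2. -/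
/-!
Write `S(t) = {x | ∃ u, A x + B u - t • b ∈ K}`, so that `S(1)` is the represented set and
`Q` consists of the sums of points of `S₁(λ₁)` and `S₂(λ₂)`. Since `K` is a cone, `S(t)` is
stable under nonnegative scaling and `S(s) + S(t) ⊆ S(s + t)`; hence `S(t) = t • S(1)` for
`t > 0`. At `t = 0` the elements of `S(0)` are recession directions of `S(1)`, so boundedness
forces `S(0) = {0} = 0 • S(1)`. Thus `Q = ⋃ λ₁ • S₁(1) + λ₂ • S₂(1)`, which is the convex hull
of the union of the two convex sets `S₁(1)` and `S₂(1)`.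
-/

open Set
open scoped Pointwise

def PointedCone.ofSet {F : Type*} [AddCommGroup F] [Module ℝ F] (K : Set F) (zero_mem : 0 ∈ K)
    (smul_mem : ∀ t : ℝ, 0 ≤ t → ∀ k ∈ K, t • k ∈ K)
    (add_mem : ∀ k₁ ∈ K, ∀ k₂ ∈ K, k₁ + k₂ ∈ K) : PointedCone ℝ F where
  carrier := K
  zero_mem' := zero_mem
  add_mem' ha hb := add_mem _ ha _ hb
  smul_mem' c _ hk := smul_mem c c.2 _ hk

theorem mem_convexHull_union_iff {𝕜 E : Type*} [Field 𝕜] [LinearOrder 𝕜]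
    [IsStrictOrderedRing 𝕜] [AddCommGroup E] [Module 𝕜 E] {s t : Set E}
    (hs : Convex 𝕜 s) (ht : Convex 𝕜 t) (hs₀ : s.Nonempty) (ht₀ : t.Nonempty) {x : E} :
    x ∈ convexHull 𝕜 (s ∪ t) ↔ ∃ a b : 𝕜, 0 ≤ a ∧ 0 ≤ b ∧ a + b = 1 ∧ x ∈ a • s + b • t := by
  rw [hs.convexHull_union ht hs₀ ht₀, mem_convexJoin]
  constructor
  · rintro ⟨y, hy, z, hz, a, b, ha, hb, hab, rfl⟩
    exact ⟨a, b, ha, hb, hab, add_mem_add (smul_mem_smul_set hy) (smul_mem_smul_set hz)⟩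
  · rintro ⟨a, b, ha, hb, hab, _, ⟨y, hy, rfl⟩, _, ⟨z, hz, rfl⟩, rfl⟩
    exact ⟨y, hy, z, hz, a, b, ha, hb, hab, rfl⟩

theorem eq_zero_of_isBounded_of_add_smul_mem {E : Type*} [NormedAddCommGroup E]
    [NormedSpace ℝ E] {S : Set E} (hS : Bornology.IsBounded S) {x y : E}
    (hray : ∀ t : ℝ, 0 ≤ t → y + t • x ∈ S) : x = 0 := by
  obtain ⟨C, hC⟩ := hS.exists_norm_le
  have hbound : ∀ t : ℝ, 0 ≤ t → t * ‖x‖ ≤ C + ‖y‖ := fun t ht =>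
    calc t * ‖x‖ = ‖(y + t • x) - y‖ := by
          rw [add_sub_cancel_left, norm_smul, Real.norm_of_nonneg ht]
      _ ≤ ‖y + t • x‖ + ‖y‖ := norm_sub_le _ _
      _ ≤ C + ‖y‖ := by gcongr; exact hC _ (hray t ht)
  by_contra hx
  have hx_pos : 0 < ‖x‖ := norm_pos_iff.mpr hx
  have hC_nonneg : 0 ≤ C + ‖y‖ := by simpa using hbound 0 le_rfl
  have := hbound ((C + ‖y‖ + 1) / ‖x‖) (by positivity)
  rw [div_mul_cancel₀ _ hx_pos.ne'] at this
  linarith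

section ConicSlice

variable {E F G : Type*} [AddCommGroup F] [Module ℝ F] [AddCommGroup G] [Module ℝ G]

section Module

variable [AddCommGroup E] [Module ℝ E]

/-- The slice at height `t` of the homogenization of `{x | ∃ u, A x + B u - b ∈ C}`. -/
def conicSlice (C : PointedCone ℝ F) (A : E →ₗ[ℝ] F) (B : G →ₗ[ℝ] F) (b : F) (t : ℝ) :
    Set E :=
  {x | ∃ u, A x + B u - t • b ∈ C}

variable {C : PointedCone ℝ F} {A : E →ₗ[ℝ] F} {B : G →ₗ[ℝ] F} {b : F} {s t c : ℝ} {x y : E}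

theorem conicSlice_one : conicSlice C A B b 1 = {x | ∃ u, A x + B u - b ∈ C} := by
  simp only [conicSlice, one_smul]

theorem smul_mem_conicSlice (hc : 0 ≤ c) (hx : x ∈ conicSlice C A B b t) :
    c • x ∈ conicSlice C A B b (c * t) := by
  obtain ⟨u, hu⟩ := hx
  refine ⟨c • u, ?_⟩
  convert C.smul_mem hc hu using 1
  simp only [map_smul, smul_sub, smul_add, smul_smul]

theorem add_mem_conicSlice (hx : x ∈ conicSlice C A B b s) (hy : y ∈ conicSlice C A B b t) :
    x + y ∈ conicSlice C A B b (s + t) := by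
  obtain ⟨u, hu⟩ := hx
  obtain ⟨v, hv⟩ := hy
  refine ⟨u + v, ?_⟩
  convert C.add_mem hu hv using 1
  simp only [map_add, add_smul]
  abel

theorem convex_conicSlice : Convex ℝ (conicSlice C A B b t) := by
  intro x hx y hy p q hp hq hpq
  simpa [← add_mul, hpq] using
    add_mem_conicSlice (smul_mem_conicSlice hp hx) (smul_mem_conicSlice hq hy)

end Module

variable [NormedAddCommGroup E] [NormedSpace ℝ E]
  {C : PointedCone ℝ F} {A : E →ₗ[ℝ] F} {B : G →ₗ[ℝ] F} {b : F} {t : ℝ} {x : E}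

theorem eq_zero_of_mem_conicSlice_zero (hne : (conicSlice C A B b 1).Nonempty)
    (hbdd : Bornology.IsBounded (conicSlice C A B b 1)) (hx : x ∈ conicSlice C A B b 0) :
    x = 0 := by
  obtain ⟨y, hy⟩ := hne
  refine eq_zero_of_isBounded_of_add_smul_mem hbdd (y := y) fun t ht => ?_
  simpa using add_mem_conicSlice hy (smul_mem_conicSlice ht hx)

theorem conicSlice_eq_smul (ht : 0 ≤ t) (hne : (conicSlice C A B b 1).Nonempty)
    (hbdd : Bornology.IsBounded (conicSlice C A B b 1)) :
    conicSlice C A B b t = t • conicSlice C A B b 1 := by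
  ext x
  constructor
  · intro hx
    rcases ht.eq_or_lt with rfl | ht
    · rw [zero_smul_set hne, eq_zero_of_mem_conicSlice_zero hne hbdd hx]
      rfl
    · refine ⟨t⁻¹ • x, ?_, smul_inv_smul₀ ht.ne' x⟩
      simpa [inv_mul_cancel₀ ht.ne'] using smul_mem_conicSlice (inv_nonneg.2 ht.le) hx
  · rintro ⟨y, hy, rfl⟩
    simpa using smul_mem_conicSlice ht hy

theorem mem_smul_conicSlice_one_iff (ht : 0 ≤ t) (hne : (conicSlice C A B b 1).Nonempty)
    (hbdd : Bornology.IsBounded (conicSlice C A B b 1)) :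
    x ∈ t • conicSlice C A B b 1 ↔ ∃ u, A x + B u - t • b ∈ C := by
  rw [← conicSlice_eq_smul ht hne hbdd]
  rfl

end ConicSlice

theorem conic_union_extended_formulation_exact_general
    (n m₁ m₂ p₁ p₂ : ℕ)
    (K₁ : Set (Fin m₁ → ℝ)) (K₂ : Set (Fin m₂ → ℝ))
    (hK₁zero : (0 : Fin m₁ → ℝ) ∈ K₁)
    (hK₁smul : ∀ t : ℝ, 0 ≤ t → ∀ k ∈ K₁, t • k ∈ K₁)
    (hK₁add : ∀ k₁ ∈ K₁, ∀ k₂ ∈ K₁, k₁ + k₂ ∈ K₁)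
    (hK₂zero : (0 : Fin m₂ → ℝ) ∈ K₂)
    (hK₂smul : ∀ t : ℝ, 0 ≤ t → ∀ k ∈ K₂, t • k ∈ K₂)
    (hK₂add : ∀ k₁ ∈ K₂, ∀ k₂ ∈ K₂, k₁ + k₂ ∈ K₂)
    (A₁ : (Fin n → ℝ) →ₗ[ℝ] (Fin m₁ → ℝ)) (B₁ : (Fin p₁ → ℝ) →ₗ[ℝ] (Fin m₁ → ℝ))
    (b₁ : Fin m₁ → ℝ)
    (A₂ : (Fin n → ℝ) →ₗ[ℝ] (Fin m₂ → ℝ)) (B₂ : (Fin p₂ → ℝ) →ₗ[ℝ] (Fin m₂ → ℝ))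
    (b₂ : Fin m₂ → ℝ)
    (S₁ S₂ Q : Set (Fin n → ℝ))
    (hS₁ : S₁ = {x | ∃ u : Fin p₁ → ℝ, A₁ x + B₁ u - b₁ ∈ K₁})
    (hS₂ : S₂ = {x | ∃ u : Fin p₂ → ℝ, A₂ x + B₂ u - b₂ ∈ K₂})
    (hQ : Q = {x | ∃ (x₁ x₂ : Fin n → ℝ) (u₁ : Fin p₁ → ℝ) (u₂ : Fin p₂ → ℝ)
      (l₁ l₂ : ℝ), 0 ≤ l₁ ∧ 0 ≤ l₂ ∧ l₁ + l₂ = 1 ∧ x = x₁ + x₂ ∧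
      A₁ x₁ + B₁ u₁ - l₁ • b₁ ∈ K₁ ∧ A₂ x₂ + B₂ u₂ - l₂ • b₂ ∈ K₂})
    (hS₁ne : S₁.Nonempty) (hS₂ne : S₂.Nonempty)
    (hS₁bdd : Bornology.IsBounded S₁) (hS₂bdd : Bornology.IsBounded S₂) :
    Q ⊆ convexHull ℝ (S₁ ∪ S₂) ∧ Q = convexHull ℝ (S₁ ∪ S₂) := by
  suffices hQ_eq : Q = convexHull ℝ (S₁ ∪ S₂) from ⟨hQ_eq.subset, hQ_eq⟩
  obtain rfl : S₁ = conicSlice (.ofSet K₁ hK₁zero hK₁smul hK₁add) A₁ B₁ b₁ 1 := by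
    rw [hS₁, conicSlice_one]; rfl
  obtain rfl : S₂ = conicSlice (.ofSet K₂ hK₂zero hK₂smul hK₂add) A₂ B₂ b₂ 1 := by
    rw [hS₂, conicSlice_one]; rfl
  ext x
  rw [hQ, mem_convexHull_union_iff convex_conicSlice convex_conicSlice hS₁ne hS₂ne]
  simp only [mem_ofPred_eq, mem_add]
  constructor
  · rintro ⟨x₁, x₂, u₁, u₂, l₁, l₂, hl₁, hl₂, hl, rfl, hu₁, hu₂⟩
    exact ⟨l₁, l₂, hl₁, hl₂, hl,
      x₁, (mem_smul_conicSlice_one_iff hl₁ hS₁ne hS₁bdd).2 ⟨u₁, hu₁⟩,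
      x₂, (mem_smul_conicSlice_one_iff hl₂ hS₂ne hS₂bdd).2 ⟨u₂, hu₂⟩, rfl⟩
  · rintro ⟨l₁, l₂, hl₁, hl₂, hl, x₁, hx₁, x₂, hx₂, rfl⟩
    obtain ⟨u₁, hu₁⟩ := (mem_smul_conicSlice_one_iff hl₁ hS₁ne hS₁bdd).1 hx₁
    obtain ⟨u₂, hu₂⟩ := (mem_smul_conicSlice_one_iff hl₂ hS₂ne hS₂bdd).1 hx₂
    exact ⟨x₁, x₂, u₁, u₂, l₁, l₂, hl₁, hl₂, hl, rfl, hu₁, hu₂⟩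

/-- Main claim of Appendix A: for two nonempty, bounded conic representable sets the
extended formulation `Q` is contained in `conv(S₁ ∪ S₂)`, and combined with the
reverse inclusion equals the convex hull of the union. -/
theorem conic_union_extended_formulation_exact
    (n m₁ m₂ p₁ p₂ : ℕ)
    (K₁ : Set (Fin m₁ → ℝ)) (K₂ : Set (Fin m₂ → ℝ))
    (hK₁conv : Convex ℝ K₁) (hK₁zero : (0 : Fin m₁ → ℝ) ∈ K₁)
    (hK₁smul : ∀ t : ℝ, 0 ≤ t → ∀ k ∈ K₁, t • k ∈ K₁)
    (hK₁add : ∀ k₁ ∈ K₁, ∀ k₂ ∈ K₁, k₁ + k₂ ∈ K₁)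
    (hK₂conv : Convex ℝ K₂) (hK₂zero : (0 : Fin m₂ → ℝ) ∈ K₂)
    (hK₂smul : ∀ t : ℝ, 0 ≤ t → ∀ k ∈ K₂, t • k ∈ K₂)
    (hK₂add : ∀ k₁ ∈ K₂, ∀ k₂ ∈ K₂, k₁ + k₂ ∈ K₂)
    (A₁ : (Fin n → ℝ) →ₗ[ℝ] (Fin m₁ → ℝ)) (B₁ : (Fin p₁ → ℝ) →ₗ[ℝ] (Fin m₁ → ℝ))
    (b₁ : Fin m₁ → ℝ)
    (A₂ : (Fin n → ℝ) →ₗ[ℝ] (Fin m₂ → ℝ)) (B₂ : (Fin p₂ → ℝ) →ₗ[ℝ] (Fin m₂ → ℝ))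
    (b₂ : Fin m₂ → ℝ)
    (S₁ S₂ Q : Set (Fin n → ℝ))
    (hS₁ : S₁ = {x | ∃ u : Fin p₁ → ℝ, A₁ x + B₁ u - b₁ ∈ K₁})
    (hS₂ : S₂ = {x | ∃ u : Fin p₂ → ℝ, A₂ x + B₂ u - b₂ ∈ K₂})
    (hQ : Q = {x | ∃ (x₁ x₂ : Fin n → ℝ) (u₁ : Fin p₁ → ℝ) (u₂ : Fin p₂ → ℝ)
      (l₁ l₂ : ℝ), 0 ≤ l₁ ∧ 0 ≤ l₂ ∧ l₁ + l₂ = 1 ∧ x = x₁ + x₂ ∧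
      A₁ x₁ + B₁ u₁ - l₁ • b₁ ∈ K₁ ∧ A₂ x₂ + B₂ u₂ - l₂ • b₂ ∈ K₂})
    (hS₁ne : S₁.Nonempty) (hS₂ne : S₂.Nonempty)
    (hS₁bdd : Bornology.IsBounded S₁) (hS₂bdd : Bornology.IsBounded S₂) :
    Q ⊆ convexHull ℝ (S₁ ∪ S₂) ∧ Q = convexHull ℝ (S₁ ∪ S₂) :=
  conic_union_extended_formulation_exact_general n m₁ m₂ p₁ p₂ K₁ K₂ hK₁zero hK₁smul hK₁add hK₂zero
    hK₂smul hK₂add A₁ B₁ b₁ A₂ B₂ b₂ S₁ S₂ Q hS₁ hS₂ hQ hS₁ne hS₂ne hS₁bdd hS₂bdd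
end
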